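/- arXiv:2512.23596 — 3 statements merged into one kernel-verified Lean document; each statement's English description precedes it below -/
import Mathlib

section
/- If ψ : ℝ≥0 → ℝ≥0 is a subroot function with fixed point r* > 0, then for any A, a > 0 the function r ↦ A·ψ(a·r) is subroot, and its fixed point r̃ satisfies (min{1, A·a}²/a)·r* ≤ r̃ ≤ (max{1, A·a}²/a)·r*. -/
set_option maxHeartbeats 1000000 in
/-- If `ψ` is a subroot function (increasing on `(0,∞)` and `r ↦ ψ(r)/√r` decreasing on `(0,∞)`)
with fixed point `r* > 0`, then for any `A, a > 0` the function `r ↦ A·ψ(a·r)` is subroot,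
and any fixed point `r̃ > 0` of it satisfies
`(min{1, A·a}²/a)·r* ≤ r̃ ≤ (max{1, A·a}²/a)·r*`. -/
theorem subroot_rescale (ψ : ℝ → ℝ) (hψ0 : ∀ r, 0 ≤ r → 0 ≤ ψ r)
    (hmono : MonotoneOn ψ (Set.Ioi 0))
    (hdec : AntitoneOn (fun r => ψ r / Real.sqrt r) (Set.Ioi 0))
    (rstar : ℝ) (hrstar : 0 < rstar) (hfix : ψ rstar = rstar)
    (A a : ℝ) (hA : 0 < A) (ha : 0 < a) :
    (MonotoneOn (fun r => A * ψ (a * r)) (Set.Ioi 0) ∧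
      AntitoneOn (fun r => A * ψ (a * r) / Real.sqrt r) (Set.Ioi 0)) ∧
    ∀ rt : ℝ, 0 < rt → A * ψ (a * rt) = rt →
      (min 1 (A * a)) ^ 2 / a * rstar ≤ rt ∧ rt ≤ (max 1 (A * a)) ^ 2 / a * rstar := by
  have key1 : ∀ x, rstar ≤ x → ψ x ≤ Real.sqrt x * Real.sqrt rstar := by
    intro x hx
    have hx0 : (0:ℝ) < x := lt_of_lt_of_le hrstar hx
    have h := hdec (Set.mem_Ioi.2 hrstar) (Set.mem_Ioi.2 hx0) hx
    simp only [hfix, Real.div_sqrt] at h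
    have hsx : 0 < Real.sqrt x := Real.sqrt_pos.2 hx0
    calc ψ x = ψ x / Real.sqrt x * Real.sqrt x := by field_simp
      _ ≤ Real.sqrt rstar * Real.sqrt x := mul_le_mul_of_nonneg_right h hsx.le
      _ = Real.sqrt x * Real.sqrt rstar := mul_comm _ _
  have key2 : ∀ x, 0 < x → x ≤ rstar → Real.sqrt x * Real.sqrt rstar ≤ ψ x := by
    intro x hx0 hx
    have h := hdec (Set.mem_Ioi.2 hx0) (Set.mem_Ioi.2 hrstar) hx
    simp only [hfix, Real.div_sqrt] at h
    have hsx : 0 < Real.sqrt x := Real.sqrt_pos.2 hx0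
    calc Real.sqrt x * Real.sqrt rstar = Real.sqrt rstar * Real.sqrt x := mul_comm _ _
      _ ≤ ψ x / Real.sqrt x * Real.sqrt x := mul_le_mul_of_nonneg_right h hsx.le
      _ = ψ x := by field_simp
  refine ⟨⟨?_, ?_⟩, ?_⟩
  · intro x hx y hy hxy
    simp only [Set.mem_Ioi] at hx hy
    have := hmono (Set.mem_Ioi.2 (mul_pos ha hx)) (Set.mem_Ioi.2 (mul_pos ha hy))
      (by nlinarith)
    exact mul_le_mul_of_nonneg_left this hA.le
  · intro x hx y hy hxy
    simp only [Set.mem_Ioi] at hx hy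
    have h := hdec (Set.mem_Ioi.2 (mul_pos ha hx)) (Set.mem_Ioi.2 (mul_pos ha hy))
      (by nlinarith)
    simp only at h ⊢
    have hsa : Real.sqrt a ≠ 0 := ne_of_gt (Real.sqrt_pos.2 ha)
    have hsx : Real.sqrt x ≠ 0 := ne_of_gt (Real.sqrt_pos.2 hx)
    have hsy : Real.sqrt y ≠ 0 := ne_of_gt (Real.sqrt_pos.2 hy)
    have e1 : A * ψ (a*y) / Real.sqrt y
        = (A * Real.sqrt a) * (ψ (a*y) / Real.sqrt (a*y)) := by
      rw [Real.sqrt_mul ha.le]; field_simp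
    have e2 : A * ψ (a*x) / Real.sqrt x
        = (A * Real.sqrt a) * (ψ (a*x) / Real.sqrt (a*x)) := by
      rw [Real.sqrt_mul ha.le]; field_simp
    rw [e1, e2]
    exact mul_le_mul_of_nonneg_left h (by positivity)
  · intro rt hrt hfixt
    set c := A * a with hc
    have hc0 : 0 < c := mul_pos hA ha
    have hart : 0 < a * rt := mul_pos ha hrt
    have hs1 : Real.sqrt (a * rt) ^ 2 = a * rt := Real.sq_sqrt hart.le
    have hs2 : Real.sqrt rstar ^ 2 = rstar := Real.sq_sqrt hrstar.le
    have hs1n : 0 ≤ Real.sqrt (a * rt) := Real.sqrt_nonneg _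
    have hs2n : 0 ≤ Real.sqrt rstar := Real.sqrt_nonneg _
    constructor
    · have hm1 : min 1 c ≤ 1 := min_le_left _ _
      have hmc : min 1 c ≤ c := min_le_right _ _
      have hm0 : 0 < min 1 c := lt_min one_pos hc0
      rcases le_or_gt rstar (a * rt) with h | h
      · -- rt ≥ rstar / a ≥ min² rstar / a
        have : min 1 c ^ 2 ≤ 1 := by nlinarith
        rw [div_mul_eq_mul_div, div_le_iff₀ ha]
        nlinarith
      · have hk := key2 (a * rt) hart h.le
        have hle : A * (Real.sqrt (a*rt) * Real.sqrt rstar) ≤ rt := by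
          have := mul_le_mul_of_nonneg_left hk hA.le
          linarith [hfixt]
        have hsq : (A * (Real.sqrt (a*rt) * Real.sqrt rstar)) ^ 2 ≤ rt ^ 2 :=
          pow_le_pow_left₀ (by positivity) hle 2
        have e : (A * (Real.sqrt (a*rt) * Real.sqrt rstar)) ^ 2
            = A^2 * (a * rt) * rstar := by
          rw [mul_pow, mul_pow, hs1, hs2]; ring
        rw [e] at hsq
        have h3 : A^2 * a * rstar ≤ rt := by nlinarith
        have h4 : c^2 * rstar ≤ a * rt := by rw [hc]; nlinarith
        have h5 : min 1 c ^ 2 ≤ c ^ 2 := by nlinarith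
        rw [div_mul_eq_mul_div, div_le_iff₀ ha]
        nlinarith [hrstar, h4, h5]
    · have hm1 : (1:ℝ) ≤ max 1 c := le_max_left _ _
      have hmc : c ≤ max 1 c := le_max_right _ _
      rcases le_or_gt (a * rt) rstar with h | h
      · have : (1:ℝ) ≤ max 1 c ^ 2 := by nlinarith
        rw [div_mul_eq_mul_div, le_div_iff₀ ha]
        nlinarith
      · have hk := key1 (a * rt) h.le
        have hle : rt ≤ A * (Real.sqrt (a*rt) * Real.sqrt rstar) := by
          have := mul_le_mul_of_nonneg_left hk hA.le
          linarith [hfixt]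
        have hsq : rt ^ 2 ≤ (A * (Real.sqrt (a*rt) * Real.sqrt rstar)) ^ 2 :=
          pow_le_pow_left₀ hrt.le hle 2
        have e : (A * (Real.sqrt (a*rt) * Real.sqrt rstar)) ^ 2
            = A^2 * (a * rt) * rstar := by
          rw [mul_pow, mul_pow, hs1, hs2]; ring
        rw [e] at hsq
        have h3 : rt ≤ A^2 * a * rstar := by nlinarith
        have h4 : a * rt ≤ c^2 * rstar := by rw [hc]; nlinarith
        have h5 : c ^ 2 ≤ max 1 c ^ 2 := by nlinarith
        rw [div_mul_eq_mul_div, le_div_iff₀ ha]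
        nlinarith [hrstar, h4, h5]
end

section
/- Let f and f̄ be functions bounded by M, with responses bounded by M under each P_j. Then the weighted average over j of Var_{(x,y)∼P_j}[(f(x)−y)² − (f̄(x)−y)²] is at most 32M² times the weighted average over j of { E_{(x,y)∼P_j}[(f(x)−y)² − (f̄(x)−y)²] + 2·E_{x∼P_j}[(f̄(x)−f_j*(x))²] }, where f_j*(x) = E_{P_j}[y | x] is the Bayes optimal regressor for P_j. -/
open MeasureTheory ProbabilityTheory

lemma integrable_of_ae_bdd' {α : Type*} [MeasurableSpace α] {μ : Measure α} [IsFiniteMeasure μ]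
    {g : α → ℝ} (hg : AEStronglyMeasurable g μ) {C : ℝ} (h : ∀ᵐ x ∂μ, |g x| ≤ C) :
    Integrable g μ :=
  ⟨hg, HasFiniteIntegral.of_bounded (by simpa [Real.norm_eq_abs] using h)⟩

@[reducible] def sigmaFst (X : Type*) [MeasurableSpace X] : MeasurableSpace (X × ℝ) :=
  MeasurableSpace.comap (Prod.fst : X × ℝ → X) inferInstance

lemma key_var_bound {X : Type*} [MeasurableSpace X] (μ : Measure (X × ℝ))
    [IsProbabilityMeasure μ]
    (M : ℝ) (hM : 1 ≤ M) (f fbar : X → ℝ) (hfm : Measurable f) (hfbarm : Measurable fbar)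
    (hf : ∀ x, |f x| ≤ M) (hfbar : ∀ x, |fbar x| ≤ M) (hy : ∀ᵐ p ∂μ, |p.2| ≤ M) :
    variance (fun p : X × ℝ => (f p.1 - p.2) ^ 2 - (fbar p.1 - p.2) ^ 2) μ ≤
      32 * M ^ 2 * ((∫ p, ((f p.1 - p.2) ^ 2 - (fbar p.1 - p.2) ^ 2) ∂μ) +
        2 * ∫ p, (fbar p.1 -
          (μ[(fun q : X × ℝ => q.2)| sigmaFst X]) p) ^ 2 ∂μ) := by
  have hM0 : (0:ℝ) ≤ M := le_trans zero_le_one hM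
  have hm₀ : sigmaFst X ≤ (inferInstance : MeasurableSpace (X × ℝ)) :=
    (measurable_fst : Measurable (Prod.fst : X × ℝ → X)).comap_le
  set Y : X × ℝ → ℝ := fun q => q.2 with hYdef
  have hYm : Measurable Y := measurable_snd
  have hY_int : Integrable Y μ := integrable_of_ae_bdd' hYm.aestronglyMeasurable hy
  set fstar : X × ℝ → ℝ := μ[Y|sigmaFst X] with hfsdef
  have hfs_meas : StronglyMeasurable[sigmaFst X] fstar := stronglyMeasurable_condExp
  have hfs_meas0 : Measurable fstar := (hfs_meas.mono hm₀).measurable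
  have hfs_int : Integrable fstar μ := integrable_condExp
  have hfs_bd : ∀ᵐ p ∂μ, |fstar p| ≤ M := by
    have h1 : ∀ᵐ p ∂μ, |Y p| ≤ (M.toNNReal : ℝ) := by
      simpa [Real.coe_toNNReal M hM0] using hy
    simpa [Real.coe_toNNReal M hM0] using ae_bdd_condExp_of_ae_bdd (m := sigmaFst X) h1
  have hfst : @Measurable (X × ℝ) X (sigmaFst X) _ Prod.fst := fun s hs => ⟨s, hs, rfl⟩
  -- cross-term lemma
  have cross : ∀ h : X × ℝ → ℝ, StronglyMeasurable[sigmaFst X] h → (∀ᵐ p ∂μ, ‖h p‖ ≤ 2 * M) →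
      ∫ p, h p * (Y p - fstar p) ∂μ = 0 := by
    intro h hsm hbd
    have hmeas : Measurable h := (hsm.mono hm₀).measurable
    have h1 : μ[h * Y|sigmaFst X] =ᵐ[μ] h * μ[Y|sigmaFst X] :=
      condExp_stronglyMeasurable_mul_of_bound hm₀ hsm hY_int (2 * M) hbd
    have hhY_int : Integrable (fun p => h p * Y p) μ :=
      integrable_of_ae_bdd' (hmeas.mul hYm).aestronglyMeasurable
        (C := 2 * M * M) (by
          filter_upwards [hbd, hy] with p h1 h2
          rw [abs_mul]
          exact mul_le_mul (by simpa [Real.norm_eq_abs] using h1) h2 (abs_nonneg _)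
            (by positivity))
    have hhfs_int : Integrable (fun p => h p * fstar p) μ :=
      integrable_of_ae_bdd' (hmeas.mul hfs_meas0).aestronglyMeasurable
        (C := 2 * M * M) (by
          filter_upwards [hbd, hfs_bd] with p h1 h2
          rw [abs_mul]
          exact mul_le_mul (by simpa [Real.norm_eq_abs] using h1) h2 (abs_nonneg _)
            (by positivity))
    have e1 : ∫ p, h p * Y p ∂μ = ∫ p, h p * fstar p ∂μ := by
      calc ∫ p, h p * Y p ∂μ = ∫ p, (μ[h * Y|sigmaFst X]) p ∂μ := (integral_condExp hm₀).symm
        _ = ∫ p, h p * fstar p ∂μ := integral_congr_ae h1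
    rw [show (fun p => h p * (Y p - fstar p)) = fun p => h p * Y p - h p * fstar p by
        funext p; ring,
      integral_sub hhY_int hhfs_int, e1, sub_self]
  -- residuals
  set a : X × ℝ → ℝ := fun p => f p.1 - fstar p with hadef
  set abar : X × ℝ → ℝ := fun p => fbar p.1 - fstar p with habardef
  set b : X × ℝ → ℝ := fun p => fstar p - Y p with hbdef
  have ham : Measurable a := (hfm.comp measurable_fst).sub hfs_meas0
  have habarm : Measurable abar := (hfbarm.comp measurable_fst).sub hfs_meas0
  have hbm : Measurable b := hfs_meas0.sub hYm
  have ha_bd : ∀ᵐ p ∂μ, |a p| ≤ 2 * M := by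
    filter_upwards [hfs_bd] with p hp
    calc |a p| ≤ |f p.1| + |fstar p| := abs_sub _ _
      _ ≤ M + M := add_le_add (hf _) hp
      _ = 2 * M := by ring
  have habar_bd : ∀ᵐ p ∂μ, |abar p| ≤ 2 * M := by
    filter_upwards [hfs_bd] with p hp
    calc |abar p| ≤ |fbar p.1| + |fstar p| := abs_sub _ _
      _ ≤ M + M := add_le_add (hfbar _) hp
      _ = 2 * M := by ring
  have hb_bd : ∀ᵐ p ∂μ, |b p| ≤ 2 * M := by
    filter_upwards [hfs_bd, hy] with p hp hyp
    calc |b p| ≤ |fstar p| + |Y p| := abs_sub _ _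
      _ ≤ M + M := add_le_add hp hyp
      _ = 2 * M := by ring
  have hsq_int : ∀ (g : X × ℝ → ℝ) (C : ℝ), Measurable g → (∀ᵐ p ∂μ, |g p| ≤ C) →
      Integrable (fun p => g p ^ 2) μ := by
    intro g C hg hbd
    refine integrable_of_ae_bdd' ((hg.pow_const 2).aestronglyMeasurable) (C := C ^ 2) ?_
    filter_upwards [hbd] with p hp
    rw [abs_pow, sq_abs]
    calc g p ^ 2 ≤ |g p| ^ 2 := by rw [sq_abs]
      _ ≤ C ^ 2 := by
          apply sq_le_sq' _ hp
          linarith [abs_nonneg (g p)]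
  have ha2_int := hsq_int a (2*M) ham ha_bd
  have habar2_int := hsq_int abar (2*M) habarm habar_bd
  have hb2_int := hsq_int b (2*M) hbm hb_bd
  have ha_sm : StronglyMeasurable[sigmaFst X] a :=
    ((hfm.comp hfst).stronglyMeasurable).sub hfs_meas
  have habar_sm : StronglyMeasurable[sigmaFst X] abar :=
    ((hfbarm.comp hfst).stronglyMeasurable).sub hfs_meas
  have cross_a : ∫ p, a p * (Y p - fstar p) ∂μ = 0 :=
    cross a ha_sm (by simpa [Real.norm_eq_abs] using ha_bd)
  have cross_abar : ∫ p, abar p * (Y p - fstar p) ∂μ = 0 :=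
    cross abar habar_sm (by simpa [Real.norm_eq_abs] using habar_bd)
  -- orthogonal expansion
  have expand : ∀ g : X × ℝ → ℝ, Measurable g → (∀ᵐ p ∂μ, |g p| ≤ 2 * M) →
      (∫ p, g p * (Y p - fstar p) ∂μ = 0) →
      ∫ p, (g p + b p) ^ 2 ∂μ = ∫ p, g p ^ 2 ∂μ + ∫ p, b p ^ 2 ∂μ := by
    intro g hg hbd hcross
    have hg2 := hsq_int g (2*M) hg hbd
    have hgb_int : Integrable (fun p => g p * b p) μ :=
      integrable_of_ae_bdd' (hg.mul hbm).aestronglyMeasurable (C := (2*M) * (2*M)) (by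
        filter_upwards [hbd, hb_bd] with p h1 h2
        rw [abs_mul]; exact mul_le_mul h1 h2 (abs_nonneg _) (by positivity))
    have hgb0 : ∫ p, g p * b p ∂μ = 0 := by
      have he : (fun p => g p * b p) = fun p => -(g p * (Y p - fstar p)) := by
        funext p
        show g p * (fstar p - Y p) = -(g p * (Y p - fstar p))
        ring
      rw [he, integral_neg, hcross, neg_zero]
    have he2 : (fun p => (g p + b p) ^ 2) =
        fun p => (g p ^ 2 + b p ^ 2) + 2 * (g p * b p) := by funext p; ring
    have i1 : Integrable (fun p => g p ^ 2 + b p ^ 2) μ := hg2.add hb2_int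
    have i2 : Integrable (fun p => 2 * (g p * b p)) μ := hgb_int.const_mul 2
    rw [he2, integral_add i1 i2, integral_add hg2 hb2_int, integral_const_mul, hgb0]
    ring
  have exp_f : ∫ p, (f p.1 - p.2) ^ 2 ∂μ = ∫ p, a p ^ 2 ∂μ + ∫ p, b p ^ 2 ∂μ := by
    rw [← expand a ham ha_bd cross_a]
    apply integral_congr_ae
    filter_upwards with p
    show (f p.1 - p.2) ^ 2 = ((f p.1 - fstar p) + (fstar p - p.2)) ^ 2
    ring
  have exp_fbar : ∫ p, (fbar p.1 - p.2) ^ 2 ∂μ =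
      ∫ p, abar p ^ 2 ∂μ + ∫ p, b p ^ 2 ∂μ := by
    rw [← expand abar habarm habar_bd cross_abar]
    apply integral_congr_ae
    filter_upwards with p
    show (fbar p.1 - p.2) ^ 2 = ((fbar p.1 - fstar p) + (fstar p - p.2)) ^ 2
    ring
  -- integrability of the main pieces
  have hF_bd : ∀ᵐ p ∂μ, |f p.1 - p.2| ≤ 2 * M := by
    filter_upwards [hy] with p hp
    calc |f p.1 - p.2| ≤ |f p.1| + |p.2| := abs_sub _ _
      _ ≤ M + M := add_le_add (hf _) hp
      _ = 2 * M := by ring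
  have hFb_bd : ∀ᵐ p ∂μ, |fbar p.1 - p.2| ≤ 2 * M := by
    filter_upwards [hy] with p hp
    calc |fbar p.1 - p.2| ≤ |fbar p.1| + |p.2| := abs_sub _ _
      _ ≤ M + M := add_le_add (hfbar _) hp
      _ = 2 * M := by ring
  have hF2_int := hsq_int (fun p => f p.1 - p.2) (2*M)
    ((hfm.comp measurable_fst).sub measurable_snd) hF_bd
  have hFb2_int := hsq_int (fun p => fbar p.1 - p.2) (2*M)
    ((hfbarm.comp measurable_fst).sub measurable_snd) hFb_bd
  set G : X × ℝ → ℝ := fun p => (f p.1 - p.2) ^ 2 - (fbar p.1 - p.2) ^ 2 with hGdef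
  have hGm : Measurable G :=
    (((hfm.comp measurable_fst).sub measurable_snd).pow_const 2).sub
      (((hfbarm.comp measurable_fst).sub measurable_snd).pow_const 2)
  have hG_int_eq : ∫ p, G p ∂μ = ∫ p, a p ^ 2 ∂μ - ∫ p, abar p ^ 2 ∂μ := by
    rw [hGdef]
    rw [integral_sub hF2_int hFb2_int, exp_f, exp_fbar]
    ring
  -- variance bound
  have hvar : variance G μ ≤ ∫ p, G p ^ 2 ∂μ := by
    exact variance_le_expectation_sq (μ := μ) (X := G) hGm.aestronglyMeasurable
  have hG2_bd : ∀ᵐ p ∂μ, G p ^ 2 ≤ 32 * M ^ 2 * (a p ^ 2 + abar p ^ 2) := by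
    filter_upwards [hy] with p hp
    have key : G p = (a p - abar p) * ((f p.1 - p.2) + (fbar p.1 - p.2)) := by
      show (f p.1 - p.2) ^ 2 - (fbar p.1 - p.2) ^ 2 =
        ((f p.1 - fstar p) - (fbar p.1 - fstar p)) * ((f p.1 - p.2) + (fbar p.1 - p.2))
      ring
    have h4M : |(f p.1 - p.2) + (fbar p.1 - p.2)| ≤ 4 * M := by
      calc |(f p.1 - p.2) + (fbar p.1 - p.2)| ≤ |f p.1| + |fbar p.1| + 2 * |p.2| := by
            have := abs_add_le (f p.1 - p.2) (fbar p.1 - p.2)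
            have h1 : |f p.1 - p.2| ≤ |f p.1| + |p.2| := abs_sub _ _
            have h2 : |fbar p.1 - p.2| ≤ |fbar p.1| + |p.2| := abs_sub _ _
            linarith
        _ ≤ M + M + 2 * M := by linarith [hf p.1, hfbar p.1, hp]
        _ = 4 * M := by ring
    calc G p ^ 2 = (a p - abar p) ^ 2 * ((f p.1 - p.2) + (fbar p.1 - p.2)) ^ 2 := by
          rw [key]; ring
      _ ≤ (a p - abar p) ^ 2 * (4 * M) ^ 2 := by
          apply mul_le_mul_of_nonneg_left _ (sq_nonneg _)
          rw [← sq_abs]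
          apply sq_le_sq' _ h4M
          linarith [abs_nonneg ((f p.1 - p.2) + (fbar p.1 - p.2))]
      _ ≤ (2 * a p ^ 2 + 2 * abar p ^ 2) * (16 * M ^ 2) := by
          apply mul_le_mul (by nlinarith [sq_nonneg (a p + abar p)])
            (le_of_eq (by ring)) (by positivity) (by positivity)
      _ = 32 * M ^ 2 * (a p ^ 2 + abar p ^ 2) := by ring
  have hG2_int : Integrable (fun p => G p ^ 2) μ := by
    refine hsq_int G (8 * M ^ 2) hGm ?_
    filter_upwards [hF_bd, hFb_bd] with p h1 h2
    have e1 : (f p.1 - p.2) ^ 2 ≤ 4 * M ^ 2 := by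
      nlinarith [abs_nonneg (f p.1 - p.2), sq_abs (f p.1 - p.2)]
    have e2 : (fbar p.1 - p.2) ^ 2 ≤ 4 * M ^ 2 := by
      nlinarith [abs_nonneg (fbar p.1 - p.2), sq_abs (fbar p.1 - p.2)]
    have e1' : (0:ℝ) ≤ (f p.1 - p.2) ^ 2 := sq_nonneg _
    have e2' : (0:ℝ) ≤ (fbar p.1 - p.2) ^ 2 := sq_nonneg _
    rw [hGdef, abs_sub_le_iff]
    constructor <;> nlinarith
  have hRHS_int : Integrable (fun p => 32 * M ^ 2 * (a p ^ 2 + abar p ^ 2)) μ :=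
    (ha2_int.add habar2_int).const_mul _
  have hmain : ∫ p, G p ^ 2 ∂μ ≤ 32 * M ^ 2 * (∫ p, a p ^ 2 ∂μ + ∫ p, abar p ^ 2 ∂μ) := by
    calc ∫ p, G p ^ 2 ∂μ ≤ ∫ p, 32 * M ^ 2 * (a p ^ 2 + abar p ^ 2) ∂μ :=
          integral_mono_ae hG2_int hRHS_int hG2_bd
      _ = 32 * M ^ 2 * (∫ p, a p ^ 2 ∂μ + ∫ p, abar p ^ 2 ∂μ) := by
          rw [integral_const_mul, integral_add ha2_int habar2_int]
  calc variance G μ ≤ ∫ p, G p ^ 2 ∂μ := hvar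
    _ ≤ 32 * M ^ 2 * (∫ p, a p ^ 2 ∂μ + ∫ p, abar p ^ 2 ∂μ) := hmain
    _ = 32 * M ^ 2 * ((∫ p, G p ∂μ) + 2 * ∫ p, abar p ^ 2 ∂μ) := by
        rw [hG_int_eq]; ring

/-- The weighted average over `j` of `Var_{P_j}[(f(x)-y)² - (f̄(x)-y)²]` is at most
`32 M²` times the weighted average over `j` of
`E_{P_j}[(f(x)-y)² - (f̄(x)-y)²] + 2 E_{x∼P_j}[(f̄(x) - f_j*(x))²]`,
where `f_j* = E_{P_j}[y | x]` is the Bayes regressor (formalized as the conditional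
expectation of the second coordinate given the σ-algebra generated by the first). -/
theorem weighted_variance_noise_condition {X : Type*} [MeasurableSpace X]
    (t k : ℕ) (hk : 1 ≤ k) (hkt : k < t)
    (m : ℕ → ℝ) (hm : ∀ j ∈ Finset.Icc (t - k) (t - 1), 0 < m j)
    (P : ℕ → Measure (X × ℝ))
    (hP : ∀ j ∈ Finset.Icc (t - k) (t - 1), IsProbabilityMeasure (P j))
    (M : ℝ) (hM : 1 ≤ M)
    (f fbar : X → ℝ) (hfm : Measurable f) (hfbarm : Measurable fbar)
    (hf : ∀ x, |f x| ≤ M) (hfbar : ∀ x, |fbar x| ≤ M)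
    (hy : ∀ j ∈ Finset.Icc (t - k) (t - 1), ∀ᵐ p ∂(P j), |p.2| ≤ M)
    (mtk : ℝ) (hmtk : mtk = ∑ j ∈ Finset.Icc (t - k) (t - 1), m j) :
    (1 / mtk) * ∑ j ∈ Finset.Icc (t - k) (t - 1),
        m j * variance (fun p : X × ℝ => (f p.1 - p.2) ^ 2 - (fbar p.1 - p.2) ^ 2) (P j)
      ≤ 32 * M ^ 2 * ((1 / mtk) * ∑ j ∈ Finset.Icc (t - k) (t - 1),
          m j * ((∫ p, ((f p.1 - p.2) ^ 2 - (fbar p.1 - p.2) ^ 2) ∂(P j)) +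
            2 * ∫ p, (fbar p.1 -
              ((P j)[(fun q : X × ℝ => q.2)|
                MeasurableSpace.comap (Prod.fst : X × ℝ → X) inferInstance]) p) ^ 2 ∂(P j))) := by
  have h1mtk : 0 ≤ 1 / mtk := by
    rw [hmtk]
    exact one_div_nonneg.mpr (Finset.sum_nonneg fun j hj => (hm j hj).le)
  have hsum : ∑ j ∈ Finset.Icc (t - k) (t - 1),
        m j * variance (fun p : X × ℝ => (f p.1 - p.2) ^ 2 - (fbar p.1 - p.2) ^ 2) (P j)
      ≤ ∑ j ∈ Finset.Icc (t - k) (t - 1),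
        m j * (32 * M ^ 2 * ((∫ p, ((f p.1 - p.2) ^ 2 - (fbar p.1 - p.2) ^ 2) ∂(P j)) +
            2 * ∫ p, (fbar p.1 -
              ((P j)[(fun q : X × ℝ => q.2)|
                MeasurableSpace.comap (Prod.fst : X × ℝ → X) inferInstance]) p) ^ 2 ∂(P j))) := by
    refine Finset.sum_le_sum fun j hj => ?_
    haveI := hP j hj
    exact mul_le_mul_of_nonneg_left
      (key_var_bound (P j) M hM f fbar hfm hfbarm hf hfbar (hy j hj)) (hm j hj).le
  have heq : ∑ j ∈ Finset.Icc (t - k) (t - 1),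
        m j * (32 * M ^ 2 * ((∫ p, ((f p.1 - p.2) ^ 2 - (fbar p.1 - p.2) ^ 2) ∂(P j)) +
            2 * ∫ p, (fbar p.1 -
              ((P j)[(fun q : X × ℝ => q.2)|
                MeasurableSpace.comap (Prod.fst : X × ℝ → X) inferInstance]) p) ^ 2 ∂(P j)))
      = 32 * M ^ 2 * ∑ j ∈ Finset.Icc (t - k) (t - 1),
        m j * ((∫ p, ((f p.1 - p.2) ^ 2 - (fbar p.1 - p.2) ^ 2) ∂(P j)) +
            2 * ∫ p, (fbar p.1 -
              ((P j)[(fun q : X × ℝ => q.2)|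
                MeasurableSpace.comap (Prod.fst : X × ℝ → X) inferInstance]) p) ^ 2 ∂(P j)) := by
    rw [Finset.mul_sum]
    exact Finset.sum_congr rfl fun j _ => by ring
  have := mul_le_mul_of_nonneg_left hsum h1mtk
  rw [heq] at this
  calc (1 / mtk) * ∑ j ∈ Finset.Icc (t - k) (t - 1),
        m j * variance (fun p : X × ℝ => (f p.1 - p.2) ^ 2 - (fbar p.1 - p.2) ^ 2) (P j)
      ≤ (1 / mtk) * (32 * M ^ 2 * ∑ j ∈ Finset.Icc (t - k) (t - 1),
        m j * ((∫ p, ((f p.1 - p.2) ^ 2 - (fbar p.1 - p.2) ^ 2) ∂(P j)) +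
            2 * ∫ p, (fbar p.1 -
              ((P j)[(fun q : X × ℝ => q.2)|
                MeasurableSpace.comap (Prod.fst : X × ℝ → X) inferInstance]) p) ^ 2 ∂(P j))) :=
        this
    _ = 32 * M ^ 2 * ((1 / mtk) * ∑ j ∈ Finset.Icc (t - k) (t - 1),
          m j * ((∫ p, ((f p.1 - p.2) ^ 2 - (fbar p.1 - p.2) ^ 2) ∂(P j)) +
            2 * ∫ p, (fbar p.1 -
              ((P j)[(fun q : X × ℝ => q.2)|
                MeasurableSpace.comap (Prod.fst : X × ℝ → X) inferInstance]) p) ^ 2 ∂(P j))) := by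
        ring
end

section
/- Let f₁, f₂ : X → [−M, M] and suppose |y| ≤ M a.s. under each distribution P_j. Define u(x,y) = (f₁(x) − y)² − (f₂(x) − y)². Then for each j, Var_{(x,y)∼P_j}[u(x,y)] ≤ 32M²·(E_j(f₁) + E_j(f₂)), where E_j(f) = E_{x∼P_j}[(f(x) − f_j*(x))²] is the excess risk with f_j*(x) = E_{P_j}[y | x]. -/
open MeasureTheory ProbabilityTheory

/-! Pointwise, `u = (f₁ - f₂)(f₁ + f₂ - 2y)` with `|f₁ + f₂ - 2y| ≤ 4M`, and `(f₁ - f₂)²` is at most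
twice the sum of the squared distances of `f₁` and `f₂` to any third point, in particular to the
conditional mean `f*`. Bounding the variance by the second moment and integrating gives the claim. -/

lemma sq_sub_le_two_mul_add_sq (a b c : ℝ) : (a - b) ^ 2 ≤ 2 * ((a - c) ^ 2 + (b - c) ^ 2) := by
  have h := add_sq_le (a := a - c) (b := c - b)
  ring_nf at h ⊢
  linarith

lemma sq_sub_sq_sub_sq_le {M a b c y : ℝ} (ha : |a| ≤ M) (hb : |b| ≤ M) (hy : |y| ≤ M) :
    ((a - y) ^ 2 - (b - y) ^ 2) ^ 2 ≤ 32 * M ^ 2 * ((a - c) ^ 2 + (b - c) ^ 2) := by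
  obtain ⟨ha₁, ha₂⟩ := abs_le.mp ha
  obtain ⟨hb₁, hb₂⟩ := abs_le.mp hb
  obtain ⟨hy₁, hy₂⟩ := abs_le.mp hy
  have hsum : (a + b - 2 * y) ^ 2 ≤ (4 * M) ^ 2 := sq_le_sq' (by linarith) (by linarith)
  calc ((a - y) ^ 2 - (b - y) ^ 2) ^ 2 = (a - b) ^ 2 * (a + b - 2 * y) ^ 2 := by ring
    _ ≤ 2 * ((a - c) ^ 2 + (b - c) ^ 2) * (4 * M) ^ 2 :=
        mul_le_mul (sq_sub_le_two_mul_add_sq a b c) hsum (sq_nonneg _) (by positivity)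
    _ = 32 * M ^ 2 * ((a - c) ^ 2 + (b - c) ^ 2) := by ring

lemma variance_le_integral_of_sq_le {Ω : Type*} [MeasurableSpace Ω] {μ : Measure Ω}
    [IsProbabilityMeasure μ] {u v : Ω → ℝ} (hu : AEStronglyMeasurable u μ) (hv : Integrable v μ)
    (huv : ∀ᵐ ω ∂μ, u ω ^ 2 ≤ v ω) :
    variance u μ ≤ ∫ ω, v ω ∂μ :=
  (variance_le_expectation_sq hu).trans <|
    integral_mono_of_nonneg (ae_of_all _ fun ω => sq_nonneg (u ω)) hv huv

theorem variance_gap_bound_general {X : Type*} [MeasurableSpace X]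
    (P : Measure (X × ℝ)) [IsProbabilityMeasure P]
    (M : ℝ)
    (f₁ f₂ : X → ℝ) (hf₁m : Measurable f₁) (hf₂m : Measurable f₂)
    (hf₁ : ∀ x, |f₁ x| ≤ M) (hf₂ : ∀ x, |f₂ x| ≤ M)
    (hy : ∀ᵐ p ∂P, |p.2| ≤ M) :
    variance (fun p : X × ℝ => (f₁ p.1 - p.2) ^ 2 - (f₂ p.1 - p.2) ^ 2) P ≤
      32 * M ^ 2 *
        ((∫ p, (f₁ p.1 -
            (P[(fun q : X × ℝ => q.2)|
              MeasurableSpace.comap (Prod.fst : X × ℝ → X) inferInstance]) p) ^ 2 ∂P) +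
          ∫ p, (f₂ p.1 -
            (P[(fun q : X × ℝ => q.2)|
              MeasurableSpace.comap (Prod.fst : X × ℝ → X) inferInstance]) p) ^ 2 ∂P) := by
  set g := P[(fun q : X × ℝ => q.2)|MeasurableSpace.comap (Prod.fst : X × ℝ → X) inferInstance]
  have hY : MemLp (fun q : X × ℝ => q.2) 2 P :=
    .of_bound measurable_snd.aestronglyMeasurable M hy
  have hexcess (f : X → ℝ) (hfm : Measurable f) (hf : ∀ x, |f x| ≤ M) :
      Integrable (fun p => (f p.1 - g p) ^ 2) P :=
    ((MemLp.of_bound (hfm.comp measurable_fst).aestronglyMeasurable M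
      (ae_of_all _ fun p => hf p.1)).sub (hY.condExp one_le_two)).integrable_sq
  have hu : Measurable fun p : X × ℝ => (f₁ p.1 - p.2) ^ 2 - (f₂ p.1 - p.2) ^ 2 := by fun_prop
  calc _ ≤ ∫ p, 32 * M ^ 2 * ((f₁ p.1 - g p) ^ 2 + (f₂ p.1 - g p) ^ 2) ∂P :=
        variance_le_integral_of_sq_le hu.aestronglyMeasurable
          (((hexcess f₁ hf₁m hf₁).add (hexcess f₂ hf₂m hf₂)).const_mul _)
          (hy.mono fun p hp => sq_sub_sq_sub_sq_le (hf₁ p.1) (hf₂ p.1) hp)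
    _ = _ := by rw [integral_const_mul, integral_add (hexcess f₁ hf₁m hf₁) (hexcess f₂ hf₂m hf₂)]

/-- With `u(x,y) = (f₁(x)-y)² - (f₂(x)-y)²`, for `f₁, f₂` bounded by `M` and responses
bounded by `M` a.s. under `P`, we have
`Var_P[u] ≤ 32 M² (E(f₁) + E(f₂))`, where `E(f) = E_{x∼P}[(f(x) - f*(x))²]` is the
excess risk and `f*(x) = E_P[y | x]` is the conditional mean (formalized via the
conditional expectation of the second coordinate given the σ-algebra generated by
the first coordinate). -/
theorem variance_gap_bound {X : Type*} [MeasurableSpace X]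
    (P : Measure (X × ℝ)) [IsProbabilityMeasure P]
    (M : ℝ) (hM : 1 ≤ M)
    (f₁ f₂ : X → ℝ) (hf₁m : Measurable f₁) (hf₂m : Measurable f₂)
    (hf₁ : ∀ x, |f₁ x| ≤ M) (hf₂ : ∀ x, |f₂ x| ≤ M)
    (hy : ∀ᵐ p ∂P, |p.2| ≤ M) :
    variance (fun p : X × ℝ => (f₁ p.1 - p.2) ^ 2 - (f₂ p.1 - p.2) ^ 2) P ≤
      32 * M ^ 2 *
        ((∫ p, (f₁ p.1 -
            (P[(fun q : X × ℝ => q.2)|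
              MeasurableSpace.comap (Prod.fst : X × ℝ → X) inferInstance]) p) ^ 2 ∂P) +
          ∫ p, (f₂ p.1 -
            (P[(fun q : X × ℝ => q.2)|
              MeasurableSpace.comap (Prod.fst : X × ℝ → X) inferInstance]) p) ^ 2 ∂P) :=
  variance_gap_bound_general P M f₁ f₂ hf₁m hf₂m hf₁ hf₂ hy
end
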